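/- arXiv:2604.08843 — 2 statements merged into one kernel-verified Lean document; each statement's English description precedes it below -/
import Mathlib

section
/- Let q be a prime power, let C be an [n,k] linear code over F_{q^2} with ℓ = dim Hull_H(C), and let t be an integer with 0 ≤ t < ℓ. Then the length of the shortest t-dimensional Hermitian hull embeddings of C is n + ℓ − t. -/
open Matrix

/-- The Hermitian dual of a code `C` in `F^ι`, where `F` has characteristic `p` and the
conjugation is `x ↦ x ^ p ^ m` (so `q = p ^ m`). -/
def dualH {F : Type*} [Field F] (p m : ℕ) [Fact p.Prime] [CharP F p]
    {ι : Type*} [Fintype ι] (C : Submodule F (ι → F)) : Submodule F (ι → F) where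
  carrier := {v | ∀ u ∈ C, ∑ i, u i * v i ^ p ^ m = 0}
  add_mem' := fun {a b} ha hb u hu => by
    have key : ∀ i, u i * (a + b) i ^ p ^ m
        = u i * a i ^ p ^ m + u i * b i ^ p ^ m := by
      intro i
      have h : (a i + b i) ^ p ^ m = a i ^ p ^ m + b i ^ p ^ m := by
        simpa [iterateFrobenius_def] using map_add (iterateFrobenius F p m) (a i) (b i)
      simp [h, mul_add]
    rw [Finset.sum_congr rfl fun i _ => key i, Finset.sum_add_distrib, ha u hu, hb u hu,
      add_zero]
  zero_mem' := fun u _ => by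
    have h0 : (0 : F) ^ p ^ m = 0 :=
      zero_pow (pow_ne_zero m (Nat.Prime.ne_zero Fact.out))
    simp [h0]
  smul_mem' := fun c a ha u hu => by
    have key : ∀ i, u i * (c • a) i ^ p ^ m = c ^ p ^ m * (u i * a i ^ p ^ m) := by
      intro i
      simp only [Pi.smul_apply, smul_eq_mul, mul_pow]
      ring
    rw [Finset.sum_congr rfl fun i _ => key i, ← Finset.mul_sum, ha u hu, mul_zero]

/-- The Hermitian hull of a code: `Hull_H(C) = C ⊓ C^{⊥_H}`. -/
def hullH {F : Type*} [Field F] (p m : ℕ) [Fact p.Prime] [CharP F p]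
    {ι : Type*} [Fintype ι] (C : Submodule F (ι → F)) : Submodule F (ι → F) :=
  C ⊓ dualH p m C

/-- `G` is a generator matrix of the code `C`: its rows form a basis of `C`. -/
def IsGenMat {F : Type*} [Field F] {κ ι : Type*}
    (C : Submodule F (ι → F)) (G : Matrix κ ι F) : Prop :=
  LinearIndependent F (fun i => G i) ∧ Submodule.span F (Set.range fun i => G i) = C

/-- `Ct` (a code of length `n + |ι|`) is a `t`-dimensional Hermitian hull embedding of the
`[n,k]` code `C`: `dim Hull_H(Ct) = t` and `Ct` has a generator matrix `[G | D]` where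
`G` is a generator matrix of `C`. -/
def IsHullEmbH {F : Type*} [Field F] (p m : ℕ) [Fact p.Prime] [CharP F p]
    {n : ℕ} (k : ℕ) {ι : Type*} [Fintype ι]
    (C : Submodule F (Fin n → F)) (Ct : Submodule F ((Fin n ⊕ ι) → F)) (t : ℕ) : Prop :=
  Module.finrank F (hullH p m Ct) = t ∧
  ∃ (G : Matrix (Fin k) (Fin n) F) (D : Matrix (Fin k) ι F),
    IsGenMat C G ∧ IsGenMat Ct (Matrix.fromCols G D)

open Module

set_option linter.unusedSectionVars false
set_option synthInstance.maxHeartbeats 1000000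
set_option maxHeartbeats 3000000

section Aux
variable {F : Type*} [Field F] (p m : ℕ) [Fact p.Prime] [CharP F p] (σ : F ≃+* F)

lemma gram_mulVec_apply {k : ℕ} {ι : Type*} [Fintype ι] (G : Matrix (Fin k) ι F)
    (x : Fin k → F) (i : Fin k) :
    ((G.map ⇑σ.symm * Gᵀ) *ᵥ x) i = ∑ c, σ.symm (G i c) * (x ᵥ* G) c := by
  simp only [Matrix.mulVec, Matrix.vecMul, dotProduct, Matrix.mul_apply,
    Matrix.map_apply, Matrix.transpose_apply, Finset.sum_mul, Finset.mul_sum]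
  rw [Finset.sum_comm]
  exact Finset.sum_congr rfl fun c _ => Finset.sum_congr rfl fun j _ => by ring

lemma gram_mulVec_sigma (hσ : ∀ x : F, σ x = x ^ p ^ m)
    {k : ℕ} {ι : Type*} [Fintype ι] (G : Matrix (Fin k) ι F)
    (x : Fin k → F) (i : Fin k) :
    σ (((G.map ⇑σ.symm * Gᵀ) *ᵥ x) i) = ∑ c, G i c * ((x ᵥ* G) c) ^ p ^ m := by
  rw [gram_mulVec_apply, map_sum]
  exact Finset.sum_congr rfl fun c _ => by
    rw [_root_.map_mul, RingEquiv.apply_symm_apply, hσ]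

lemma hullH_eq_map (hσ : ∀ x : F, σ x = x ^ p ^ m)
    {k : ℕ} {ι : Type*} [Fintype ι] (C : Submodule F (ι → F))
    (G : Matrix (Fin k) ι F) (hG : IsGenMat C G) :
    hullH p m C
      = Submodule.map G.vecMulLinear (LinearMap.ker ((G.map ⇑σ.symm * Gᵀ).mulVecLin)) := by
  have hrow : ∀ i, G i ∈ C := fun i => hG.2 ▸ Submodule.subset_span ⟨i, rfl⟩
  ext v
  constructor
  · rintro ⟨hvC, hvD⟩
    have hv : v ∈ LinearMap.range G.vecMulLinear := by
      rw [range_vecMulLinear, show Set.range G.row = Set.range fun i => G i from rfl, hG.2]; exact hvC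
    obtain ⟨x, rfl⟩ := hv
    refine ⟨x, ?_, rfl⟩
    simp only [SetLike.mem_coe, LinearMap.mem_ker]
    funext i
    apply σ.injective
    simp only [Pi.zero_apply, map_zero, Matrix.mulVecLin_apply]
    rw [gram_mulVec_sigma p m σ hσ]
    exact hvD (G i) (hrow i)
  · rintro ⟨x, hx, rfl⟩
    simp only [SetLike.mem_coe, LinearMap.mem_ker] at hx
    constructor
    · rw [← hG.2, show (Set.range fun i => G i) = Set.range G.row from rfl, ← range_vecMulLinear]
      exact ⟨x, rfl⟩
    · intro u hu
      rw [← hG.2] at hu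
      induction hu using Submodule.span_induction with
      | mem w hw =>
        obtain ⟨i, rfl⟩ := hw
        have h2 := gram_mulVec_sigma p m σ hσ G x i
        rw [Matrix.mulVecLin_apply] at hx
        rw [hx] at h2
        simpa using h2.symm
      | zero => simp
      | add a b _ _ ha hb =>
        simp only [Pi.add_apply, add_mul, Finset.sum_add_distrib, ha, hb, add_zero]
      | smul c a _ ha =>
        simp only [Pi.smul_apply, smul_eq_mul, mul_assoc, ← Finset.mul_sum, ha, mul_zero]

lemma finrank_hullH (hσ : ∀ x : F, σ x = x ^ p ^ m)
    {k : ℕ} {ι : Type*} [Fintype ι] (C : Submodule F (ι → F))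
    (G : Matrix (Fin k) ι F) (hG : IsGenMat C G) :
    finrank F (hullH p m C)
      = finrank F (LinearMap.ker ((G.map ⇑σ.symm * Gᵀ).mulVecLin)) := by
  rw [hullH_eq_map p m σ hσ C G hG]
  have hinj : Function.Injective G.vecMulLinear := by
    rw [Matrix.coe_vecMulLinear]
    exact Matrix.vecMul_injective_iff.mpr hG.1
  exact (Submodule.equivMapOfInjective G.vecMulLinear hinj _).finrank_eq.symm

lemma finrank_ker_add_rank {k : ℕ} (N : Matrix (Fin k) (Fin k) F) :
    finrank F (LinearMap.ker N.mulVecLin) + N.rank = k := by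
  have h := LinearMap.finrank_range_add_finrank_ker N.mulVecLin
  rw [finrank_pi, Fintype.card_fin] at h
  rw [Matrix.rank]
  omega

lemma matrix_rank_add_le {k l : ℕ} (A B : Matrix (Fin k) (Fin l) F) :
    (A + B).rank ≤ A.rank + B.rank := by
  have hle : LinearMap.range (A + B).mulVecLin
      ≤ LinearMap.range A.mulVecLin ⊔ LinearMap.range B.mulVecLin := by
    rintro y ⟨x, rfl⟩
    have h : (A + B).mulVecLin x = A.mulVecLin x + B.mulVecLin x := by
      simp [Matrix.mulVecLin_apply, Matrix.add_mulVec]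
    rw [h]
    exact Submodule.add_mem_sup ⟨x, rfl⟩ ⟨x, rfl⟩
  exact le_trans (Submodule.finrank_mono hle)
    (Submodule.finrank_add_le_finrank_add_finrank _ _)

lemma matrix_rank_neg {k l : ℕ} (A : Matrix (Fin k) (Fin l) F) :
    (-A).rank = A.rank := by
  have heq : LinearMap.range (-A).mulVecLin = LinearMap.range A.mulVecLin := by
    ext y
    constructor
    · rintro ⟨x, rfl⟩
      exact ⟨-x, by simp [Matrix.mulVecLin_apply, Matrix.neg_mulVec, Matrix.mulVec_neg]⟩
    · rintro ⟨x, rfl⟩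
      exact ⟨-x, by simp [Matrix.mulVecLin_apply, Matrix.neg_mulVec, Matrix.mulVec_neg]⟩
  unfold Matrix.rank
  rw [heq]

lemma gram_fromColumns {k n : ℕ} {ι : Type*} [Fintype ι]
    (G : Matrix (Fin k) (Fin n) F) (D : Matrix (Fin k) ι F) :
    (fromCols G D).map ⇑σ.symm * (fromCols G D)ᵀ
      = G.map ⇑σ.symm * Gᵀ + D.map ⇑σ.symm * Dᵀ := by
  have hmap : (fromCols G D).map ⇑σ.symm
      = fromCols (G.map ⇑σ.symm) (D.map ⇑σ.symm) := by
    ext i j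
    cases j <;> rfl
  rw [hmap, transpose_fromCols, fromCols_mul_fromRows]

lemma exists_hull_embedding [Fintype F]
    (hσ : ∀ x : F, σ x = x ^ p ^ m) (hσσ : ∀ x : F, σ (σ x) = x)
    {n k ℓ t : ℕ} (C : Submodule F (Fin n → F)) (hk : finrank F C = k)
    (hℓ : finrank F (hullH p m C) = ℓ) (ht : t < ℓ) :
    ∃ Ct : Submodule F ((Fin n ⊕ Fin (ℓ - t)) → F), IsHullEmbH p m k C Ct t := by
  classical
  have hsymm : ∀ x : F, σ.symm x = σ x := fun x => by
    conv_lhs => rw [← hσσ x]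
    rw [RingEquiv.symm_apply_apply]
  set s := ℓ - t with hs
  have hHC : hullH p m C ≤ C := inf_le_left
  have hlk : ℓ ≤ k := by
    have h := Submodule.finrank_mono hHC
    rw [hℓ, hk] at h
    exact h
  set H' : Submodule F C := (hullH p m C).comap C.subtype with hH'def
  have hH'l : finrank F H' = ℓ := by
    rw [← hℓ]
    exact (Submodule.comapSubtypeEquivOfLe hHC).finrank_eq
  obtain ⟨W, hW⟩ := Submodule.exists_isCompl H'
  have hWr : finrank F W = k - ℓ := by
    have h := Submodule.finrank_add_eq_of_isCompl hW
    rw [hH'l, hk] at h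
    omega
  haveI : Module.Free F H' := Module.Free.of_divisionRing F H'
  haveI : Module.Free F W := Module.Free.of_divisionRing F W
  haveI : Module.Finite F H' := inferInstance
  haveI : Module.Finite F W := inferInstance
  set bH : Basis (Fin ℓ) F H' := finBasisOfFinrankEq F H' hH'l with hbH
  set bW : Basis (Fin (k - ℓ)) F W := finBasisOfFinrankEq F W hWr with hbW
  set bC : Basis (Fin ℓ ⊕ Fin (k - ℓ)) F C :=
    (bH.prod bW).map (Submodule.prodEquivOfIsCompl H' W hW) with hbC
  have hbCinl : ∀ u : Fin ℓ, ((bC (Sum.inl u) : C) : Fin n → F) ∈ hullH p m C := by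
    intro u
    have h1 : (bC (Sum.inl u) : C) = (bH u : C) := by
      simp only [hbC, Basis.map_apply, Basis.prod_apply, Sum.elim_inl, Function.comp_apply,
        Submodule.coe_prodEquivOfIsCompl', LinearMap.coe_inl]
      simp
    rw [h1]
    exact Submodule.mem_comap.mp (bH u).2
  have hkeq : k = ℓ + (k - ℓ) := by omega
  set e : Fin k ≃ (Fin ℓ ⊕ Fin (k - ℓ)) := (finCongr hkeq).trans finSumFinEquiv.symm with he
  set G : Matrix (Fin k) (Fin n) F := Matrix.of fun i c => ((bC (e i) : C) : Fin n → F) c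
    with hGdef
  have hGrow : ∀ i, G i = ((bC (e i) : C) : Fin n → F) := fun i => rfl
  have hrowsC : (fun i => G i) = (fun j => (C.subtype (bC j))) ∘ e := rfl
  have hGindep : LinearIndependent F (fun i => G i) := by
    rw [hrowsC]
    exact (bC.linearIndependent.map' C.subtype (Submodule.ker_subtype C)).comp e e.injective
  have hGspan : Submodule.span F (Set.range fun i => G i) = C := by
    rw [hrowsC, Function.Surjective.range_comp e.surjective]
    have : Set.range (fun j => C.subtype (bC j)) = C.subtype '' Set.range bC := by
      rw [← Set.range_comp]; rfl
    rw [this, ← Submodule.map_span, bC.span_eq, Submodule.map_top, Submodule.range_subtype]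
  have hGgen : IsGenMat C G := ⟨hGindep, hGspan⟩
  have hrowmem : ∀ i, G i ∈ C := fun i => hGspan ▸ Submodule.subset_span ⟨i, rfl⟩
  have hsl : s ≤ ℓ := by omega
  have hst : s + t = ℓ := by omega
  set D : Matrix (Fin k) (Fin s) F :=
    Matrix.of fun i j => if e i = Sum.inl (Fin.castLE hsl j) then 1 else 0 with hDdef
  set Gt := fromCols G D with hGt
  set Ct := Submodule.span F (Set.range fun i => Gt i) with hCt
  have hGtindep : LinearIndependent F (fun i => Gt i) := by
    have hcomp : (fun i => G i) = (LinearMap.funLeft F F Sum.inl) ∘ (fun i => Gt i) := rfl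
    exact LinearIndependent.of_comp _ (hcomp ▸ hGindep)
  have hGtgen : IsGenMat Ct Gt := ⟨hGtindep, rfl⟩
  set A := G.map ⇑σ.symm * Gᵀ with hA
  set B := D.map ⇑σ.symm * Dᵀ with hB
  -- entry formulas
  have hAentry : ∀ i j, A i j = ∑ c, σ.symm (G i c) * G j c := by
    intro i j
    simp [hA, Matrix.mul_apply]
  have hA_col : ∀ i j, G j ∈ dualH p m C → A i j = 0 := by
    intro i j hj
    apply σ.injective
    rw [map_zero, hAentry, map_sum]
    have h2 : ∀ c, σ (σ.symm (G i c) * G j c) = G i c * (G j c) ^ p ^ m := by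
      intro c
      rw [_root_.map_mul, RingEquiv.apply_symm_apply, hσ]
    rw [Finset.sum_congr rfl fun c _ => h2 c]
    exact hj (G i) (hrowmem i)
  have hA_row : ∀ i j, G i ∈ dualH p m C → A i j = 0 := by
    intro i j hi
    rw [hAentry]
    have h2 : ∀ c, σ.symm (G i c) * G j c = G j c * (G i c) ^ p ^ m := by
      intro c
      rw [hsymm, hσ, mul_comm]
    rw [Finset.sum_congr rfl fun c _ => h2 c]
    exact hi (G j) (hrowmem j)
  -- hull rows
  set f : Fin ℓ → Fin k := fun u => e.symm (Sum.inl u) with hf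
  have hfinj : Function.Injective f :=
    fun a b h => Sum.inl_injective (e.symm.injective h)
  have hef : ∀ u, e (f u) = Sum.inl u := fun u => e.apply_symm_apply _
  have hGf : ∀ u : Fin ℓ, G (f u) ∈ hullH p m C := by
    intro u
    rw [hGrow, hef]
    exact hbCinl u
  have hGfd : ∀ u : Fin ℓ, G (f u) ∈ dualH p m C := fun u => (hGf u).2
  -- kernel of A
  set U := Submodule.span F (Set.range fun u : Fin ℓ => (Pi.single (f u) 1 : Fin k → F)) with hU
  have hsingles : LinearIndependent F (fun u : Fin ℓ => (Pi.single (f u) 1 : Fin k → F)) := by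
    have heq : (fun u : Fin ℓ => (Pi.single (f u) 1 : Fin k → F))
        = ⇑(Pi.basisFun F (Fin k)) ∘ f := by
      funext u
      simp [Pi.basisFun_apply]
    rw [heq]
    exact (Pi.basisFun F (Fin k)).linearIndependent.comp f hfinj
  have hUrank : finrank F U = ℓ := by
    rw [hU, finrank_span_eq_card hsingles, Fintype.card_fin]
  have hUker : U ≤ LinearMap.ker A.mulVecLin := by
    rw [hU, Submodule.span_le]
    rintro _ ⟨u, rfl⟩
    simp only [SetLike.mem_coe, LinearMap.mem_ker, Matrix.mulVecLin_apply,
      Matrix.mulVec_single_one]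
    funext i
    exact hA_col i (f u) (hGfd u)
  have hkerA : finrank F (LinearMap.ker A.mulVecLin) = ℓ := by
    rw [← finrank_hullH p m σ hσ C G hGgen]
    exact hℓ
  have hUeq : U = LinearMap.ker A.mulVecLin :=
    Submodule.eq_of_le_of_finrank_eq hUker (by rw [hUrank, hkerA])
  have hsupp : ∀ x ∈ LinearMap.ker A.mulVecLin, ∀ i, (∀ u : Fin ℓ, i ≠ f u) → x i = 0 := by
    intro x hx
    rw [← hUeq, hU] at hx
    induction hx using Submodule.span_induction with
    | mem w hw =>
      obtain ⟨u, rfl⟩ := hw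
      intro i hi
      show (Pi.single (f u) 1 : Fin k → F) i = 0
      exact Pi.single_eq_of_ne (hi u) 1
    | zero => intro i _; rfl
    | add a b _ _ ha hb => intro i hi; simp [ha i hi, hb i hi]
    | smul c a _ ha => intro i hi; simp [ha i hi]
  -- B entries
  have hBij : ∀ i j, B i j =
      if i = j ∧ ∃ c : Fin s, e i = Sum.inl (Fin.castLE hsl c) then 1 else 0 := by
    intro i j
    rw [hB, Matrix.mul_apply]
    by_cases hij : ∃ c : Fin s, e i = Sum.inl (Fin.castLE hsl c)
    · obtain ⟨c₀, hc₀⟩ := hij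
      by_cases hji : i = j
      · subst hji
        rw [if_pos ⟨rfl, c₀, hc₀⟩]
        rw [Finset.sum_eq_single c₀]
        · simp [hDdef, hc₀]
        · intro c _ hc
          have : ¬ (e i = Sum.inl (Fin.castLE hsl c)) := by
            rw [hc₀]
            intro h
            exact hc (by
              have := Sum.inl_injective h
              exact (Fin.castLE_injective hsl this).symm ▸ rfl)
          simp [hDdef, this]
        · intro h
          exact absurd (Finset.mem_univ c₀) h
      · rw [if_neg (fun h => hji h.1)]
        apply Finset.sum_eq_zero
        intro c _
        by_cases hic : e i = Sum.inl (Fin.castLE hsl c)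
        · have hjc : ¬ (e j = Sum.inl (Fin.castLE hsl c)) := by
            intro h
            exact hji (e.injective (hic.trans h.symm))
          simp [hDdef, hjc]
        · simp [hDdef, hic]
    · rw [if_neg (fun h => hij h.2)]
      apply Finset.sum_eq_zero
      intro c _
      have hic : ¬ (e i = Sum.inl (Fin.castLE hsl c)) := fun h => hij ⟨c, h⟩
      simp [hDdef, hic]
  have hBx : ∀ (x : Fin k → F) (i),
      (B *ᵥ x) i = if ∃ c : Fin s, e i = Sum.inl (Fin.castLE hsl c) then x i else 0 := by
    intro x i
    have : (B *ᵥ x) i = ∑ j, B i j * x j := rfl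
    rw [this, Finset.sum_congr rfl fun j _ => by rw [hBij i j]]
    rw [Finset.sum_eq_single i]
    · by_cases hq : ∃ c : Fin s, e i = Sum.inl (Fin.castLE hsl c)
      · rw [if_pos ⟨rfl, hq⟩, if_pos hq, one_mul]
      · rw [if_neg (fun h => hq h.2), if_neg hq, zero_mul]
    · intro j _ hji
      rw [if_neg (fun h => hji h.1.symm), zero_mul]
    · intro h
      exact absurd (Finset.mem_univ i) h
  -- kernel of A + B
  set fT : Fin t → Fin k := fun v => f ⟨s + v.val, by omega⟩ with hfT
  have hfTinj : Function.Injective fT := by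
    intro a b h
    have := hfinj h
    have h2 : s + a.val = s + b.val := congrArg Fin.val this
    exact Fin.ext (by omega)
  set U' := Submodule.span F (Set.range fun v : Fin t => (Pi.single (fT v) 1 : Fin k → F)) with hU'
  have hsingles' : LinearIndependent F (fun v : Fin t => (Pi.single (fT v) 1 : Fin k → F)) := by
    have heq : (fun v : Fin t => (Pi.single (fT v) 1 : Fin k → F))
        = ⇑(Pi.basisFun F (Fin k)) ∘ fT := by
      funext v
      simp [Pi.basisFun_apply]
    rw [heq]
    exact (Pi.basisFun F (Fin k)).linearIndependent.comp fT hfTinj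
  have hU'rank : finrank F U' = t := by
    rw [hU', finrank_span_eq_card hsingles', Fintype.card_fin]
  have hU'K : U' ≤ LinearMap.ker (A + B).mulVecLin := by
    rw [hU', Submodule.span_le]
    rintro _ ⟨v, rfl⟩
    simp only [SetLike.mem_coe, LinearMap.mem_ker, Matrix.mulVecLin_apply, Matrix.add_mulVec]
    have h1 : A *ᵥ (Pi.single (fT v) 1 : Fin k → F) = 0 := by
      rw [Matrix.mulVec_single_one]
      funext i
      exact hA_col i (fT v) (hGfd _)
    have h2 : B *ᵥ (Pi.single (fT v) 1 : Fin k → F) = 0 := by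
      funext i
      rw [hBx]
      by_cases hq : ∃ c : Fin s, e i = Sum.inl (Fin.castLE hsl c)
      · rw [if_pos hq]
        obtain ⟨c, hc⟩ := hq
        have hne : i ≠ fT v := by
          intro h
          subst h
          rw [hfT] at hc
          rw [hef] at hc
          have := Sum.inl_injective hc
          have h3 : s + v.val = (Fin.castLE hsl c).val := congrArg Fin.val this
          have h4 : (Fin.castLE hsl c).val < s := c.isLt
          omega
        exact Pi.single_eq_of_ne hne 1
      · rw [if_neg hq]; simp
    rw [h1, h2, add_zero]
  have hKU' : LinearMap.ker (A + B).mulVecLin ≤ U' := by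
    intro x hx
    rw [LinearMap.mem_ker, Matrix.mulVecLin_apply, Matrix.add_mulVec] at hx
    -- step 1
    have hstep1 : ∀ u : Fin ℓ, u.val < s → x (f u) = 0 := by
      intro u hu
      have hrow0 : (A *ᵥ x) (f u) = 0 := by
        have : (A *ᵥ x) (f u) = ∑ j, A (f u) j * x j := rfl
        rw [this]
        apply Finset.sum_eq_zero
        intro j _
        rw [hA_row (f u) j (hGfd u), zero_mul]
      have hq : ∃ c : Fin s, e (f u) = Sum.inl (Fin.castLE hsl c) :=
        ⟨⟨u.val, hu⟩, by rw [hef]; congr 1⟩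
      have hBxu := hBx x (f u)
      rw [if_pos hq] at hBxu
      have : (A *ᵥ x) (f u) + (B *ᵥ x) (f u) = 0 := congrFun hx (f u)
      rw [hrow0, zero_add, hBxu] at this
      exact this
    -- step 2 : B *ᵥ x = 0
    have hBx0 : B *ᵥ x = 0 := by
      funext i
      rw [hBx]
      by_cases hq : ∃ c : Fin s, e i = Sum.inl (Fin.castLE hsl c)
      · rw [if_pos hq]
        obtain ⟨c, hc⟩ := hq
        have hi : i = f (Fin.castLE hsl c) := by
          rw [hf]
          exact e.injective (by rw [e.apply_symm_apply]; exact hc)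
        rw [hi]
        exact hstep1 _ c.isLt
      · rw [if_neg hq]; rfl
    have hAx0 : x ∈ LinearMap.ker A.mulVecLin := by
      rw [LinearMap.mem_ker, Matrix.mulVecLin_apply]
      rw [hBx0, add_zero] at hx
      exact hx
    have hsuppx := hsupp x hAx0
    -- write x as sum of singles
    have hxsum : x = ∑ i, Pi.single i (x i) := (Finset.univ_sum_single x).symm
    rw [hxsum]
    apply Submodule.sum_mem
    intro i _
    by_cases hxi : x i = 0
    · rw [hxi]
      simp
    · -- i is a hull index not among the first s
      have hiu : ∃ u : Fin ℓ, i = f u := by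
        by_contra h
        push_neg at h
        exact hxi (hsuppx i h)
      obtain ⟨u, rfl⟩ := hiu
      have hus : s ≤ u.val := by
        by_contra h
        push_neg at h
        exact hxi (hstep1 u h)
      have hul : u.val < ℓ := u.isLt
      set v : Fin t := ⟨u.val - s, by omega⟩ with hv
      have hveq : s + (v : ℕ) = (u : ℕ) := by simp only [hv]; omega
      have hfv : fT v = f u := by
        rw [hfT]
        exact congrArg f (Fin.ext hveq)
      have hsingle : Pi.single (f u) (x (f u)) = x (f u) • (Pi.single (f u) 1 : Fin k → F) := by
        rw [← Pi.single_smul, smul_eq_mul, mul_one]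
      rw [hsingle]
      refine Submodule.smul_mem _ _ (Submodule.subset_span ⟨v, ?_⟩)
      show (Pi.single (fT v) 1 : Fin k → F) = Pi.single (f u) 1
      rw [hfv]
  have hKeq : LinearMap.ker (A + B).mulVecLin = U' := le_antisymm hKU' hU'K
  have hhullCt : finrank F (hullH p m Ct) = t := by
    rw [finrank_hullH p m σ hσ Ct Gt hGtgen]
    rw [hGt, gram_fromColumns σ G D, ← hA, ← hB, hKeq, hU'rank]
  exact ⟨Ct, hhullCt, G, D, hGgen, hGtgen⟩

end Aux

/-- Let `q = p ^ m` be a prime power, `C` an `[n,k]` code over `F_{q^2}`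
with `ℓ = dim Hull_H(C)` and `0 ≤ t < ℓ`.  Then the length of the shortest
`t`-dimensional Hermitian hull embeddings of `C` is `n + ℓ - t`. -/
theorem shortest_hullH_embedding_of_lt {F : Type*} [Field F] [Fintype F]
    (p m : ℕ) [Fact p.Prime] [CharP F p] (hm : 1 ≤ m)
    (hcard : Fintype.card F = (p ^ m) ^ 2)
    {n k ℓ t : ℕ} (C : Submodule F (Fin n → F)) (hk : Module.finrank F C = k)
    (hℓ : Module.finrank F (hullH p m C) = ℓ) (ht : t < ℓ) :
    IsLeast {s : ℕ | ∃ Ct : Submodule F ((Fin n ⊕ Fin s) → F), IsHullEmbH p m k C Ct t}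
      (ℓ - t) := by
  classical
  set σ : F ≃+* F := iterateFrobeniusEquiv F p m with hσdef
  have hσ : ∀ x : F, σ x = x ^ p ^ m := fun x => iterateFrobeniusEquiv_def F p m x
  have hσσ : ∀ x : F, σ (σ x) = x := by
    intro x
    rw [hσ, hσ, ← pow_mul, ← pow_two, ← hcard, FiniteField.pow_card]
  constructor
  · exact exists_hull_embedding p m σ hσ hσσ C hk hℓ ht
  · rintro s ⟨Ct, htCt, G, D, hG, hGt⟩
    set A := G.map ⇑σ.symm * Gᵀ with hA
    set B := D.map ⇑σ.symm * Dᵀ with hB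
    have hℓA : Module.finrank F (LinearMap.ker A.mulVecLin) = ℓ := by
      rw [← finrank_hullH p m σ hσ C G hG]
      exact hℓ
    have htA : Module.finrank F (LinearMap.ker (A + B).mulVecLin) = t := by
      rw [hA, hB, ← gram_fromColumns σ G D, ← finrank_hullH p m σ hσ Ct _ hGt]
      exact htCt
    have h1 := finrank_ker_add_rank A
    have h2 := finrank_ker_add_rank (A + B)
    have h3 : (A + B).rank ≤ A.rank + B.rank := matrix_rank_add_le A B
    have h4 : B.rank ≤ s := by
      have h5 := Matrix.rank_mul_le_left (D.map ⇑σ.symm) Dᵀ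
      rw [← hB] at h5
      have h6 := Matrix.rank_le_card_width (D.map ⇑σ.symm)
      rw [Fintype.card_fin] at h6
      omega
    have e1 : ℓ + A.rank = k := by rw [← hℓA]; exact h1
    have e2 : t + (A + B).rank = k := by rw [← htA]; exact h2
    omega
end

section
/- Let q be an odd prime power and let C be an [n,k] linear code over F_q of type (E_{o,s}), with ℓ = dim Hull_E(C) and ℓ < t ≤ k. Then the length of the shortest t-dimensional Euclidean hull embeddings of C is n + t − ℓ. -/
open Matrix

/-- The Euclidean dual of a code `C` in `F^ι`. -/
def dualE {F : Type*} [Field F] {ι : Type*} [Fintype ι]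
    (C : Submodule F (ι → F)) : Submodule F (ι → F) where
  carrier := {v | ∀ u ∈ C, u ⬝ᵥ v = 0}
  add_mem' := fun {a b} ha hb u hu => by
    rw [dotProduct_add, ha u hu, hb u hu, add_zero]
  zero_mem' := fun u _ => dotProduct_zero u
  smul_mem' := fun c a ha u hu => by
    rw [dotProduct_smul, ha u hu, smul_zero]

/-- The Euclidean hull of a code: `Hull_E(C) = C ⊓ C^{⊥_E}`. -/
def hullE {F : Type*} [Field F] {ι : Type*} [Fintype ι]
    (C : Submodule F (ι → F)) : Submodule F (ι → F) :=
  C ⊓ dualE C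

/-- `Ct` (a code of length `n + |ι|`) is a `t`-dimensional Euclidean hull embedding of the
`[n,k]` code `C`: `dim Hull_E(Ct) = t` and `Ct` has a generator matrix `[G | D]` where
`G` is a generator matrix of `C`. -/
def IsHullEmbE {F : Type*} [Field F] {n : ℕ} (k : ℕ) {ι : Type*} [Fintype ι]
    (C : Submodule F (Fin n → F)) (Ct : Submodule F ((Fin n ⊕ ι) → F)) (t : ℕ) : Prop :=
  Module.finrank F (hullE Ct) = t ∧
  ∃ (G : Matrix (Fin k) (Fin n) F) (D : Matrix (Fin k) ι F),
    IsGenMat C G ∧ IsGenMat Ct (Matrix.fromCols G D)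

/-- Two square matrices are congruent if `D * A * Dᵀ = B` for some invertible `D`. -/
def MatCongruent {F : Type*} [Field F] {k : ℕ} (A B : Matrix (Fin k) (Fin k) F) : Prop :=
  ∃ D : Matrix (Fin k) (Fin k) F, IsUnit D ∧ D * A * Dᵀ = B

section Aux
variable {F : Type*} [Field F]

lemma hull_eq_map {k : ℕ} {ι : Type*} [Fintype ι] (M : Matrix (Fin k) ι F) :
    hullE (Submodule.span F (Set.range fun i => M i)) =
      Submodule.map M.vecMulLinear (LinearMap.ker (M * Mᵀ).mulVecLin) := by
  have hC : Submodule.span F (Set.range fun i => M i) = LinearMap.range M.vecMulLinear :=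
    (range_vecMulLinear M).symm
  have key : ∀ x : Fin k → F, (M * Mᵀ) *ᵥ x = M *ᵥ (x ᵥ* M) := fun x =>
    (Matrix.mulVec_vecMul M M x).symm
  ext v
  constructor
  · rintro ⟨hv1, hv2⟩
    rw [hC] at hv1
    obtain ⟨x, rfl⟩ := hv1
    refine ⟨x, ?_, rfl⟩
    rw [SetLike.mem_coe, LinearMap.mem_ker, Matrix.mulVecLin_apply, key]
    ext i
    exact hv2 (M i) (Submodule.subset_span ⟨i, rfl⟩)
  · rintro ⟨x, hx, rfl⟩
    rw [SetLike.mem_coe, LinearMap.mem_ker, Matrix.mulVecLin_apply] at hx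
    refine Submodule.mem_inf.mpr ⟨?_, ?_⟩
    · rw [hC]; exact ⟨x, rfl⟩
    · intro u hu
      rw [hC] at hu
      obtain ⟨y, rfl⟩ := hu
      simp only [Matrix.vecMulLinear_apply]
      rw [← Matrix.dotProduct_mulVec, ← key, hx, dotProduct_zero]

lemma finrank_hull {k : ℕ} {ι : Type*} [Fintype ι] (M : Matrix (Fin k) ι F)
    (h : LinearIndependent F (fun i => M i)) :
    Module.finrank F (hullE (Submodule.span F (Set.range fun i => M i))) = k - (M * Mᵀ).rank := by
  rw [hull_eq_map]
  have hinj : Function.Injective M.vecMulLinear :=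
    Matrix.vecMul_injective_iff.mpr h
  rw [← LinearEquiv.finrank_eq
    (Submodule.equivMapOfInjective M.vecMulLinear hinj (LinearMap.ker (M * Mᵀ).mulVecLin))]
  have h2 := (M * Mᵀ).mulVecLin.finrank_range_add_finrank_ker
  rw [Module.finrank_pi, Fintype.card_fin] at h2
  rw [Matrix.rank]
  omega

lemma rank_add_le' {k : ℕ} (A B : Matrix (Fin k) (Fin k) F) :
    (A + B).rank ≤ A.rank + B.rank := by
  have hle : LinearMap.range (A + B).mulVecLin ≤
      LinearMap.range A.mulVecLin ⊔ LinearMap.range B.mulVecLin := by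
    rintro v ⟨x, rfl⟩
    exact Submodule.mem_sup.mpr ⟨A.mulVecLin x, ⟨x, rfl⟩, B.mulVecLin x, ⟨x, rfl⟩,
      by simp [Matrix.mulVecLin_add]⟩
  calc (A + B).rank ≤ Module.finrank F
        (LinearMap.range A.mulVecLin ⊔ LinearMap.range B.mulVecLin : Submodule F (Fin k → F)) :=
        Submodule.finrank_mono hle
    _ ≤ A.rank + B.rank := by
        have := Submodule.finrank_sup_add_finrank_inf_eq
          (LinearMap.range A.mulVecLin) (LinearMap.range B.mulVecLin)
        rw [Matrix.rank, Matrix.rank]; omega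


variable {F : Type*} [Field F]

lemma vecMul_injective_of_isUnit {k : ℕ} {P : Matrix (Fin k) (Fin k) F} (hP : IsUnit P) :
    Function.Injective P.vecMul := by
  have hdet : IsUnit P.det := (Matrix.isUnit_iff_isUnit_det P).mp hP
  intro x y hxy
  have := congrArg (fun v => v ᵥ* P⁻¹) hxy
  simpa [Matrix.vecMul_vecMul, Matrix.mul_nonsing_inv P hdet] using this

lemma isGenMat_unit_mul {k n : ℕ} (C : Submodule F (Fin n → F)) (G : Matrix (Fin k) (Fin n) F)
    (hG : IsGenMat C G) {P : Matrix (Fin k) (Fin k) F} (hP : IsUnit P) :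
    IsGenMat C (P * G) := by
  have hdet : IsUnit P.det := (Matrix.isUnit_iff_isUnit_det P).mp hP
  constructor
  · refine Matrix.vecMul_injective_iff (M := P * G) |>.mp ?_
    intro x y hxy
    have h1 : ∀ z : Fin k → F, z ᵥ* (P * G) = (z ᵥ* P) ᵥ* G := fun z =>
      (Matrix.vecMul_vecMul z P G).symm
    have h2 : (x ᵥ* P) ᵥ* G = (y ᵥ* P) ᵥ* G := by
      rw [← h1 x, ← h1 y]; exact hxy
    have := Matrix.vecMul_injective_iff.mpr hG.1 h2
    exact _root_.vecMul_injective_of_isUnit hP this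
  · rw [← hG.2]
    change Submodule.span F (Set.range (P * G).row) = Submodule.span F (Set.range G.row)
    rw [← range_vecMulLinear, ← range_vecMulLinear]
    ext v
    constructor
    · rintro ⟨x, rfl⟩
      refine ⟨x ᵥ* P, ?_⟩
      simp only [Matrix.vecMulLinear_apply]
      rw [Matrix.vecMul_vecMul]
    · rintro ⟨y, rfl⟩
      refine ⟨y ᵥ* P⁻¹, ?_⟩
      simp only [Matrix.vecMulLinear_apply]
      rw [← Matrix.vecMul_vecMul, Matrix.vecMul_vecMul y P⁻¹ P,
        Matrix.nonsing_inv_mul P hdet, Matrix.vecMul_one]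

lemma indep_fromColumns {k : ℕ} {ι₁ ι₂ : Type*} [Fintype ι₁] [Fintype ι₂]
    {A : Matrix (Fin k) ι₁ F} (B : Matrix (Fin k) ι₂ F)
    (h : LinearIndependent F (fun i => A i)) :
    LinearIndependent F (fun i => (fromCols A B) i) := by
  replace h := Matrix.vecMul_injective_iff.mpr h
  refine Matrix.vecMul_injective_iff (M := fromCols A B) |>.mp ?_
  intro x y hxy
  apply h
  funext j
  have := congrFun hxy (Sum.inl j)
  simpa [Matrix.vecMul_fromCols] using this

lemma gram_fromColumns_s14 {k : ℕ} {ι₁ ι₂ : Type*} [Fintype ι₁] [Fintype ι₂]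
    (A : Matrix (Fin k) ι₁ F) (B : Matrix (Fin k) ι₂ F) :
    (fromCols A B) * (fromCols A B)ᵀ = A * Aᵀ + B * Bᵀ := by
  rw [Matrix.transpose_fromCols, Matrix.fromCols_mul_fromRows]


variable {F : Type*} [Field F]

lemma onehot_gram {k m : ℕ} :
    (Matrix.of fun (i : Fin k) (j : Fin m) => if (i : ℕ) = (j : ℕ) then (1 : F) else 0) *
      (Matrix.of fun (i : Fin k) (j : Fin m) => if (i : ℕ) = (j : ℕ) then (1 : F) else 0)ᵀ =
    Matrix.of fun (i i' : Fin k) => if i = i' ∧ (i : ℕ) < m then (1 : F) else 0 := by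
  ext i i'
  simp only [Matrix.mul_apply, Matrix.transpose_apply, Matrix.of_apply]
  by_cases h : (i : ℕ) < m
  · rw [Finset.sum_eq_single (⟨(i : ℕ), h⟩ : Fin m)]
    · by_cases hii : i = i'
      · subst hii; simp [h]
      · have : ¬ (i' : ℕ) = (i : ℕ) := fun e => hii (Fin.ext e.symm)
        simp [hii, this, h]
    · intro j _ hj
      have : ¬ (i : ℕ) = (j : ℕ) := fun e => hj (Fin.ext e.symm)
      simp [this]
    · intro hmem; exact absurd (Finset.mem_univ _) hmem
  · rw [Finset.sum_eq_zero, if_neg (fun hc => h hc.2)]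
    intro j _
    have : ¬ (i : ℕ) = (j : ℕ) := fun e => h (e ▸ j.isLt)
    simp [this]

lemma card_interval {k m r : ℕ} (hm : m ≤ r) (hr : r ≤ k) :
    Fintype.card {i : Fin k // m ≤ (i : ℕ) ∧ (i : ℕ) < r} = r - m := by
  have e : {i : Fin k // m ≤ (i : ℕ) ∧ (i : ℕ) < r} ≃ Fin (r - m) :=
    { toFun := fun i => ⟨(i : Fin k).1 - m, by have := i.2; omega⟩
      invFun := fun j => ⟨⟨(j : ℕ) + m, by have := j.isLt; omega⟩,
        by show m ≤ (j : ℕ) + m ∧ (j : ℕ) + m < r; have := j.isLt; omega⟩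
      left_inv := fun i => Subtype.ext (Fin.ext (by have := i.2; simp; omega))
      right_inv := fun j => Fin.ext (by simp) }
  rw [Fintype.card_congr e, Fintype.card_fin]

end Aux

/-- Let `q` be an odd prime power and `C` an `[n,k]` code over `F_q`
of type `(E_{o,s})`, i.e. `-G * Gᵀ` is congruent to `diag(I_r, 0, …, 0)` where
`r = rank (G * Gᵀ)` and `G` is a generator matrix of `C`.  If `ℓ = dim Hull_E(C)` and
`ℓ < t ≤ k`, then the length of the shortest `t`-dimensional Euclidean hull embeddings
of `C` is `n + t - ℓ`. -/

theorem shortest_type_Eos {F : Type*} [Field F] [Fintype F]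
    (hodd : Odd (Fintype.card F))
    {n k ℓ t : ℕ} (C : Submodule F (Fin n → F)) (hk : Module.finrank F C = k)
    (G : Matrix (Fin k) (Fin n) F) (hG : IsGenMat C G)
    (htype : MatCongruent (-(G * Gᵀ))
      (Matrix.of fun (i j : Fin k) =>
        if i = j ∧ (i : ℕ) < (G * Gᵀ).rank then (1 : F) else 0))
    (hℓ : Module.finrank F (hullE C) = ℓ) (ht1 : ℓ < t) (ht2 : t ≤ k) :
    IsLeast {s : ℕ | ∃ Ct : Submodule F ((Fin n ⊕ Fin s) → F), IsHullEmbE k C Ct t}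
      (t - ℓ) := by
  classical
  set r := (G * Gᵀ).rank with hr
  have hCfin : Module.finrank F (hullE C) = k - r := by
    rw [← hG.2]; exact finrank_hull G hG.1
  have hℓr : ℓ = k - r := by rw [← hℓ, hCfin]
  have hrk : r ≤ k := le_trans (Matrix.rank_le_card_height _) (by simp)
  constructor
  · -- membership : there is an embedding with s = t - ℓ
    set m := t - ℓ with hm
    have hmr : m ≤ r := by omega
    obtain ⟨P, hP, hPJ⟩ := htype
    set G' := P * G with hG'
    have hGen' : IsGenMat C G' := isGenMat_unit_mul C G hG hP
    set D' := (Matrix.of fun (i : Fin k) (j : Fin m) =>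
      if (i : ℕ) = (j : ℕ) then (1 : F) else 0) with hD'
    set M := fromCols G' D' with hM
    have hindep : LinearIndependent F (fun i => M i) := indep_fromColumns D' hGen'.1
    refine ⟨Submodule.span F (Set.range fun i => M i), ?_, G', D', hGen', hindep, rfl⟩
    rw [finrank_hull M hindep]
    have hGG : G' * G'ᵀ = -(Matrix.of fun (i j : Fin k) =>
        if i = j ∧ (i : ℕ) < r then (1 : F) else 0) := by
      rw [← hPJ, hG', Matrix.transpose_mul, ← Matrix.mul_assoc, Matrix.mul_assoc P G Gᵀ]
      simp [Matrix.mul_neg, Matrix.neg_mul]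
    have hGram : M * Mᵀ = Matrix.diagonal
        (fun i : Fin k => if m ≤ (i : ℕ) ∧ (i : ℕ) < r then (-1 : F) else 0) := by
      rw [hM, gram_fromColumns_s14, hGG, hD', onehot_gram]
      ext i j
      simp only [Matrix.add_apply, Matrix.neg_apply, Matrix.of_apply, Matrix.diagonal_apply]
      by_cases hij : i = j
      · subst hij
        by_cases h1 : (i : ℕ) < m
        · have h2 : (i : ℕ) < r := lt_of_lt_of_le h1 hmr
          simp [h1, h2, not_le.mpr h1]
        · by_cases h2 : (i : ℕ) < r
          · simp [h1, h2, not_lt.mp h1]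
          · simp [h1, h2, fun h : m ≤ (i : ℕ) ∧ (i : ℕ) < r => h2 h.2]
      · simp [hij]
    rw [hGram, Matrix.rank_diagonal]
    have hcard : Fintype.card
        {i : Fin k // (if m ≤ (i : ℕ) ∧ (i : ℕ) < r then (-1 : F) else 0) ≠ 0} = r - m := by
      rw [Fintype.card_congr (Equiv.subtypeEquivRight (q := fun i : Fin k =>
        m ≤ (i : ℕ) ∧ (i : ℕ) < r) (fun i => by
          by_cases h : m ≤ (i : ℕ) ∧ (i : ℕ) < r <;> simp [h]))]
      exact card_interval hmr hrk
    rw [hcard]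
    omega
  · -- lower bound
    rintro s ⟨Ct, ht, G₁, D₁, hG₁, hGt⟩
    set rg := ((fromCols G₁ D₁) * (fromCols G₁ D₁)ᵀ).rank with hrg
    set r₁ := (G₁ * G₁ᵀ).rank with hr₁
    have h1 : Module.finrank F (hullE Ct) = k - rg := by
      rw [← hGt.2]; exact finrank_hull _ hGt.1
    have h2 : Module.finrank F (hullE C) = k - r₁ := by
      rw [← hG₁.2]; exact finrank_hull _ hG₁.1
    have e1 : t = k - rg := by rw [← ht, h1]
    have e2 : ℓ = k - r₁ := by rw [← hℓ, h2]
    have h3 : r₁ ≤ rg + s := by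
      have he : G₁ * G₁ᵀ =
          (fromCols G₁ D₁) * (fromCols G₁ D₁)ᵀ + D₁ * (-D₁ᵀ) := by
        rw [gram_fromColumns_s14, Matrix.mul_neg]
        abel
      calc r₁ = ((fromCols G₁ D₁) * (fromCols G₁ D₁)ᵀ + D₁ * (-D₁ᵀ)).rank := by
            rw [hr₁, he]
        _ ≤ rg + (D₁ * (-D₁ᵀ)).rank := rank_add_le' _ _
        _ ≤ rg + s := Nat.add_le_add_left ((Matrix.rank_mul_le_left _ _).trans
            ((Matrix.rank_le_card_width D₁).trans (by simp))) _
    have h4 : rg ≤ k := le_trans (Matrix.rank_le_card_height _) (by simp)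
    have h5 : r₁ ≤ k := le_trans (Matrix.rank_le_card_height _) (by simp)
    omega
end
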